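/- arXiv:2508.07310 — 8 statements merged into one kernel-verified Lean document; each statement's English description precedes it below -/
import Mathlib

section
/- The NAF representation of a positive integer n has minimal Hamming weight (number of nonzero digits) among all representations of n with digits in {-1,0,1}. -/
/-!
View a digit sequence as an integer polynomial evaluated at `2`, and induct along its binary
expansion with `p = X * p.divX + C (p.coeff 0)`. Let `f` be a NAF and `g` any `{-1,0,1}`-expansion
of the same integer. If their lowest digits agree, strip them and recurse. Otherwise parity forces
`f₀ = ±1` and `g₀ = -f₀`, so `f₁ = 0`, and comparing two digits gives `g₁ = ±1`: `g` pays for two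
nonzero digits where `f` pays for one, and the values of the remaining parts differ by at most one.
Adding `±1` to a `{-1,0,1}`-expansion costs at most one extra nonzero digit (propagate a carry),
which closes the recursion.
-/

open Finset

namespace Polynomial

variable {R : Type*}

theorem degree_divX_le [Semiring R] (p : R[X]) : p.divX.degree ≤ p.degree := by
  rcases eq_or_ne p 0 with rfl | hp
  · simp
  · exact (degree_divX_lt hp).le

theorem card_support_eq_card_support_divX_add [Semiring R] [DecidableEq R] (p : R[X]) :
    #p.support = #p.divX.support + if p.coeff 0 = 0 then 0 else 1 := by
  have h : p.support.erase 0 = p.divX.support.map (addRightEmbedding 1) := by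
    ext (_ | n) <;> simp
  rw [← card_map (addRightEmbedding 1) (s := p.divX.support), ← h]
  split_ifs with h0
  · rw [erase_eq_of_notMem (by simpa using h0), add_zero]
  · exact (card_erase_add_one (mem_support_iff.2 h0)).symm

theorem eval_eq_coeff_zero_add_mul_eval_divX [CommSemiring R] (x : R) (p : R[X]) :
    p.eval x = p.coeff 0 + x * p.divX.eval x := by
  conv_lhs => rw [← X_mul_divX_add p]
  simp only [eval_add, eval_mul, eval_X, eval_C]
  ring

theorem coeff_X_mul_add_C_zero [Semiring R] (q : R[X]) (d : R) : (X * q + C d).coeff 0 = d := by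
  simp only [coeff_add, coeff_X_mul_zero, coeff_C_zero, zero_add]

theorem coeff_X_mul_add_C_succ [Semiring R] (q : R[X]) (d : R) (i : ℕ) :
    (X * q + C d).coeff (i + 1) = q.coeff i := by
  simp only [coeff_add, coeff_X_mul, coeff_C_succ, add_zero]

theorem divX_X_mul_add_C [Semiring R] (q : R[X]) (d : R) : (X * q + C d).divX = q := by
  ext i
  rw [coeff_divX, coeff_X_mul_add_C_succ]

theorem eval_X_mul_add_C [CommSemiring R] (x : R) (q : R[X]) (d : R) :
    (X * q + C d).eval x = d + x * q.eval x := by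
  rw [eval_eq_coeff_zero_add_mul_eval_divX, coeff_X_mul_add_C_zero, divX_X_mul_add_C]

theorem card_support_X_mul_add_C [Semiring R] [DecidableEq R] (q : R[X]) (d : R) :
    #(X * q + C d).support = #q.support + if d = 0 then 0 else 1 := by
  rw [card_support_eq_card_support_divX_add, coeff_X_mul_add_C_zero, divX_X_mul_add_C]

theorem eval_ofFinsupp_ofCoeff [CommSemiring R] (f : ℕ →₀ R) (x : R) :
    (ofFinsupp (.ofCoeff f) : R[X]).eval x = f.sum fun i a => a * x ^ i := by
  rw [eval_eq_sum]
  rfl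

def IsSignedBinary (p : ℤ[X]) : Prop :=
  ∀ i, p.coeff i = -1 ∨ p.coeff i = 0 ∨ p.coeff i = 1

def IsNonAdjacent (p : ℤ[X]) : Prop :=
  ∀ i, p.coeff i * p.coeff (i + 1) = 0

theorem IsSignedBinary.divX {p : ℤ[X]} (hp : IsSignedBinary p) : IsSignedBinary p.divX :=
  fun i => by simpa only [coeff_divX] using hp (i + 1)

theorem IsNonAdjacent.divX {p : ℤ[X]} (hp : IsNonAdjacent p) : IsNonAdjacent p.divX :=
  fun i => by simpa only [coeff_divX] using hp (i + 1)

theorem IsSignedBinary.X_mul_add_C {q : ℤ[X]} (hq : IsSignedBinary q) {d : ℤ}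
    (hd : d = -1 ∨ d = 0 ∨ d = 1) : IsSignedBinary (X * q + C d) := by
  rintro (_ | i)
  · rwa [coeff_X_mul_add_C_zero]
  · rw [coeff_X_mul_add_C_succ]
    exact hq i

theorem IsSignedBinary.exists_eval_add {p : ℤ[X]} (hp : IsSignedBinary p) {δ : ℤ}
    (hδ : δ = -1 ∨ δ = 0 ∨ δ = 1) :
    ∃ q, IsSignedBinary q ∧ q.eval 2 = p.eval 2 + δ ∧ #q.support ≤ #p.support + 1 := by
  have hval := eval_eq_coeff_zero_add_mul_eval_divX 2 p
  have hcard := card_support_eq_card_support_divX_add p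
  by_cases hcarry : p.coeff 0 = δ ∧ δ ≠ 0
  · have hp0 : p ≠ 0 := by
      rintro rfl
      simp only [coeff_zero] at hcarry
      omega
    obtain ⟨q, hq, hqv, hqc⟩ := hp.divX.exists_eval_add hδ
    refine ⟨X * q + C 0, hq.X_mul_add_C (by simp), ?_, ?_⟩
    · rw [eval_X_mul_add_C, hqv]
      omega
    · rw [hcarry.1, if_neg hcarry.2] at hcard
      rw [card_support_X_mul_add_C, if_pos rfl]
      omega
  · have hd : p.coeff 0 + δ = -1 ∨ p.coeff 0 + δ = 0 ∨ p.coeff 0 + δ = 1 := by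
      rcases hp 0 with h | h | h <;> omega
    refine ⟨X * p.divX + C (p.coeff 0 + δ), hp.divX.X_mul_add_C hd, ?_, ?_⟩
    · rw [eval_X_mul_add_C, hval]
      ring
    · rw [card_support_X_mul_add_C, hcard]
      split_ifs <;> omega
termination_by p.degree
decreasing_by exact degree_divX_lt hp0

theorem IsNonAdjacent.card_support_le {f g : ℤ[X]} (hna : IsNonAdjacent f)
    (hf : IsSignedBinary f) (hg : IsSignedBinary g) (h : f.eval 2 = g.eval 2) :
    #f.support ≤ #g.support := by
  rcases eq_or_ne f 0 with rfl | hf0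
  · simp
  have hfv := eval_eq_coeff_zero_add_mul_eval_divX 2 f
  have hgv := eval_eq_coeff_zero_add_mul_eval_divX 2 g
  have hfc := card_support_eq_card_support_divX_add f
  have hgc := card_support_eq_card_support_divX_add g
  have hg₀ := hg 0
  by_cases h₀ : g.coeff 0 = f.coeff 0
  · have := hna.divX.card_support_le hf.divX hg.divX (by omega)
    rw [h₀] at hgc
    omega
  · have hf₀ : f.coeff 0 = -1 ∨ f.coeff 0 = 1 := by
      have := hf 0
      omega
    have hf₁ : f.coeff 1 = 0 := (mul_eq_zero.1 (hna 0)).resolve_left (by omega)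
    have hfv' := eval_eq_coeff_zero_add_mul_eval_divX 2 f.divX
    have hgv' := eval_eq_coeff_zero_add_mul_eval_divX 2 g.divX
    have hfc' := card_support_eq_card_support_divX_add f.divX
    have hgc' := card_support_eq_card_support_divX_add g.divX
    simp only [coeff_divX, zero_add] at hfv' hgv' hfc' hgc'
    have hg₁ := hg 1
    obtain ⟨q, hq, hqv, hqc⟩ := hg.divX.divX.exists_eval_add
      (δ := f.divX.divX.eval 2 - g.divX.divX.eval 2) (by omega)
    have := hna.divX.divX.card_support_le hf.divX.divX hq (by omega)
    rw [if_neg (by omega)] at hfc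
    rw [if_pos hf₁] at hfc'
    split_ifs at hgc hgc' <;> omega
termination_by f.degree
decreasing_by
  · exact degree_divX_lt hf0
  · exact (degree_divX_le _).trans_lt (degree_divX_lt hf0)

end Polynomial

theorem stmt3_general (n : ℕ) (f g : ℕ →₀ ℤ)
    (hf1 : ∀ i, f i = -1 ∨ f i = 0 ∨ f i = 1)
    (hf2 : ∀ i, f i * f (i + 1) = 0)
    (hfv : (f.sum fun i a => a * 2 ^ i) = (n : ℤ))
    (hg1 : ∀ i, g i = -1 ∨ g i = 0 ∨ g i = 1)
    (hgv : (g.sum fun i a => a * 2 ^ i) = (n : ℤ)) :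
    f.support.card ≤ g.support.card := by
  let F : Polynomial ℤ := .ofFinsupp (.ofCoeff f)
  let G : Polynomial ℤ := .ofFinsupp (.ofCoeff g)
  have hval : F.eval 2 = G.eval 2 := by
    rw [Polynomial.eval_ofFinsupp_ofCoeff, Polynomial.eval_ofFinsupp_ofCoeff, hfv, hgv]
  exact Polynomial.IsNonAdjacent.card_support_le (f := F) (g := G) hf2 hf1 hg1 hval

/-- The NAF representation has minimal Hamming weight among all
{-1,0,1}-representations of n. -/
theorem stmt3 (n : ℕ) (hn : 0 < n) (f g : ℕ →₀ ℤ)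
    (hf1 : ∀ i, f i = -1 ∨ f i = 0 ∨ f i = 1)
    (hf2 : ∀ i, f i * f (i + 1) = 0)
    (hfv : (f.sum fun i a => a * 2 ^ i) = (n : ℤ))
    (hg1 : ∀ i, g i = -1 ∨ g i = 0 ∨ g i = 1)
    (hgv : (g.sum fun i a => a * 2 ^ i) = (n : ℤ)) :
    f.support.card ≤ g.support.card :=
  stmt3_general n f g hf1 hf2 hfv hg1 hgv
end

section
/- Let 0 < D ≤ A. For any representation N of n over a digit set S ⊇ {-1,0,1} containing a digit n_i with |n_i| > 1 and n_i odd, replacing n_i by sgn(n_i) and n_{i+1} by n_{i+1} + (n_i - sgn(n_i))/2 yields a representation N' of the same integer n with T(N', λ) ≤ T(N, λ). -/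
noncomputable def T (D A : ℝ) (d : ℕ → ℤ) : ℕ → ℝ
  | 0 => if d 0 = 0 then 0 else (((d 0).natAbs : ℝ) - 1) * A
  | i + 1 =>
      if d (i + 1) = 0 then T D A d i
      else if ∀ j < i + 1, d j = 0 then
        ((i : ℝ) + 1) * D + (((d (i + 1)).natAbs : ℝ) - 1) * A
      else max (T D A d i) (((i : ℝ) + 1) * D) + ((d (i + 1)).natAbs : ℝ) * A

noncomputable def delta (A : ℝ) (d : ℕ → ℤ) : ℕ → ℝ
  | 0 => 0
  | i + 1 =>
      if d (i + 1) = 0 then delta A d i - 1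
      else if ∀ j < i + 1, d j = 0 then 0
      else max (delta A d i + (A - 1)) A

def val (d : ℕ → ℤ) (lam : ℕ) : ℤ := ∑ i ∈ Finset.range (lam + 1), d i * 2 ^ i

lemma T_zero (D A : ℝ) (d : ℕ → ℤ) :
    T D A d 0 = if d 0 = 0 then 0 else (((d 0).natAbs : ℝ) - 1) * A := rfl

lemma T_succ (D A : ℝ) (d : ℕ → ℤ) (i : ℕ) :
    T D A d (i + 1) =
      if d (i + 1) = 0 then T D A d i
      else if ∀ j < i + 1, d j = 0 then
        ((i : ℝ) + 1) * D + (((d (i + 1)).natAbs : ℝ) - 1) * A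
      else max (T D A d i) (((i : ℝ) + 1) * D) + ((d (i + 1)).natAbs : ℝ) * A := rfl

lemma T_congr (D A : ℝ) (d e : ℕ → ℤ) (m : ℕ) (h : ∀ j ≤ m, d j = e j) :
    T D A d m = T D A e m := by
  induction m with
  | zero => rw [T_zero, T_zero, h 0 le_rfl]
  | succ m ih =>
    have h1 : d (m + 1) = e (m + 1) := h _ le_rfl
    have h3 : T D A d m = T D A e m := ih fun j hj => h j (hj.trans (Nat.le_succ m))
    have h2 : (∀ j < m + 1, d j = 0) ↔ (∀ j < m + 1, e j = 0) := by
      constructor <;> intro hz j hj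
      · rw [← h j hj.le]; exact hz j hj
      · rw [h j hj.le]; exact hz j hj
    rw [T_succ, T_succ, h1, h3]
    simp only [h2]

lemma T_mono_above (D A : ℝ) (d e : ℕ → ℤ) (i0 k : ℕ) (hk : k ≤ i0)
    (hdk : d k ≠ 0) (hek : e k ≠ 0) (hagree : ∀ j, i0 < j → e j = d j)
    (hbase : T D A e i0 ≤ T D A d i0) :
    ∀ m, i0 ≤ m → T D A e m ≤ T D A d m := by
  intro m hm
  induction m, hm using Nat.le_induction with
  | base => exact hbase
  | succ m hm ih =>
    have h1 : e (m + 1) = d (m + 1) := hagree _ (by omega)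
    have hcdd : ¬∀ j < m + 1, d j = 0 := fun h => hdk (h k (by omega))
    have hcde : ¬∀ j < m + 1, e j = 0 := fun h => hek (h k (by omega))
    rw [T_succ, T_succ, h1]
    by_cases h0 : d (m + 1) = 0
    · rw [if_pos h0, if_pos h0]; exact ih
    · rw [if_neg h0, if_neg h0, if_neg hcdd, if_neg hcde]
      exact add_le_add_left (max_le_max ih le_rfl) _

lemma val_update (d : ℕ → ℤ) (j : ℕ) (v : ℤ) (lam : ℕ) (hj : j ≤ lam) :
    val (Function.update d j v) lam = val d lam + (v - d j) * 2 ^ j := by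
  unfold val
  have hmem : j ∈ Finset.range (lam + 1) := Finset.mem_range.2 (by omega)
  rw [← Finset.add_sum_erase _ (fun k => Function.update d j v k * 2 ^ k) hmem,
    ← Finset.add_sum_erase _ (fun k => d k * 2 ^ k) hmem]
  simp only [Function.update_self]
  have he : ∑ k ∈ (Finset.range (lam + 1)).erase j, Function.update d j v k * 2 ^ k
      = ∑ k ∈ (Finset.range (lam + 1)).erase j, d k * 2 ^ k :=
    Finset.sum_congr rfl fun x hx => by
      rw [Function.update_of_ne (Finset.ne_of_mem_erase hx)]
  rw [he]; ring

/-- Replacing an odd digit n_i with |n_i| > 1 by sgn(n_i), adding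
(n_i - sgn(n_i))/2 to n_{i+1}, preserves the value and does not increase
the parallel computation time, when 0 < D ≤ A. -/
theorem stmt4 (D A : ℝ) (hD : 0 < D) (hDA : D ≤ A)
    (lam i : ℕ) (hi : i + 1 ≤ lam) (d : ℕ → ℤ)
    (hodd : Odd (d i)) (hbig : 1 < |d i|) :
    val (Function.update (Function.update d i (Int.sign (d i))) (i + 1)
        (d (i + 1) + (d i - Int.sign (d i)) / 2)) lam = val d lam ∧
    T D A (Function.update (Function.update d i (Int.sign (d i))) (i + 1)
        (d (i + 1) + (d i - Int.sign (d i)) / 2)) lam ≤ T D A d lam := by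
  have hA : 0 < A := lt_of_lt_of_le hD hDA
  obtain ⟨m0, hm0⟩ := hodd
  have hne : d i ≠ 0 := by intro h; rw [h] at hbig; norm_num at hbig
  obtain ⟨s, hs⟩ : ∃ s, s = Int.sign (d i) := ⟨_, rfl⟩
  rw [← hs]
  have hss : (0 < d i ∧ s = 1) ∨ (d i < 0 ∧ s = -1) := by
    rcases hne.lt_or_gt with h | h
    · exact Or.inr ⟨h, hs.trans (Int.sign_eq_neg_one_iff_neg.mpr h)⟩
    · exact Or.inl ⟨h, hs.trans (Int.sign_eq_one_iff_pos.mpr h)⟩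
  obtain ⟨c, hc⟩ : ∃ c, c = d (i + 1) + (d i - s) / 2 := ⟨_, rfl⟩
  rw [← hc]
  obtain ⟨d', hd'⟩ : ∃ f, f = Function.update (Function.update d i s) (i + 1) c :=
    ⟨_, rfl⟩
  rw [← hd']
  have habs : 1 < (d i).natAbs := by
    rw [Int.abs_eq_natAbs] at hbig; exact_mod_cast hbig
  have h2k : 2 * ((d i - s) / 2) = d i - s := by
    rcases hss with ⟨h, hs1⟩ | ⟨h, hs1⟩ <;> rw [hs1] <;> omega
  have hIZ : c.natAbs + 2 ≤ (d i).natAbs + (d (i + 1)).natAbs := by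
    rw [hc]
    rcases hss with ⟨h, hs1⟩ | ⟨h, hs1⟩ <;> rw [hs1] <;> omega
  have hsne : s ≠ 0 := by rcases hss with ⟨_, h⟩ | ⟨_, h⟩ <;> simp [h]
  have hsabs : s.natAbs = 1 := by rcases hss with ⟨_, h⟩ | ⟨_, h⟩ <;> simp [h]
  have hd'i1 : d' (i + 1) = c := by rw [hd']; exact Function.update_self _ _ _
  have hd'i : d' i = s := by
    rw [hd', Function.update_of_ne (by omega), Function.update_self]
  have hd'o : ∀ j, j ≠ i → j ≠ i + 1 → d' j = d j := by
    intro j h1 h2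
    rw [hd', Function.update_of_ne h2, Function.update_of_ne h1]
  constructor
  · -- value preservation
    rw [hd', val_update _ _ _ _ hi, Function.update_of_ne (by omega),
      val_update _ _ _ _ (by omega), hc]
    linear_combination ((2 : ℤ) ^ i) * h2k
  · -- time does not increase
    have hcd : ¬∀ j < i + 1, d j = 0 := fun h => hne (h i (by omega))
    have hcd' : ¬∀ j < i + 1, d' j = 0 := fun h =>
      hsne (by rw [← hd'i]; exact h i (by omega))
    have haR : (3 : ℝ) ≤ ((d i).natAbs : ℝ) := by
      exact_mod_cast (by omega : 3 ≤ (d i).natAbs)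
    have hIR : (c.natAbs : ℝ) + 2 ≤ ((d i).natAbs : ℝ) + ((d (i + 1)).natAbs : ℝ) := by
      exact_mod_cast hIZ
    have hbR : (0 : ℝ) ≤ ((d (i + 1)).natAbs : ℝ) := Nat.cast_nonneg _
    have hcRnn : (0 : ℝ) ≤ (c.natAbs : ℝ) := Nat.cast_nonneg _
    have key1 : D + (c.natAbs : ℝ) * A ≤
        (((d i).natAbs : ℝ) - 1) * A + ((d (i + 1)).natAbs : ℝ) * A := by
      nlinarith [mul_nonneg (show (0 : ℝ) ≤ ((d i).natAbs : ℝ) +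
        ((d (i + 1)).natAbs : ℝ) - (c.natAbs : ℝ) - 2 by linarith) hA.le]
    have key2 : A + (c.natAbs : ℝ) * A ≤
        ((d i).natAbs : ℝ) * A + ((d (i + 1)).natAbs : ℝ) * A := by
      nlinarith [mul_nonneg (show (0 : ℝ) ≤ ((d i).natAbs : ℝ) +
        ((d (i + 1)).natAbs : ℝ) - (c.natAbs : ℝ) - 2 by linarith) hA.le]
    have ha1A : (0 : ℝ) ≤ (((d i).natAbs : ℝ) - 1) * A := by nlinarith
    have haA : A ≤ ((d i).natAbs : ℝ) * A := by nlinarith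
    have hbase : T D A d' (i + 1) ≤ T D A d (i + 1) := by
      rcases i with _ | p
      · -- i = 0
        have hT0 : T D A d 0 = (((d 0).natAbs : ℝ) - 1) * A := by
          rw [T_zero, if_neg hne]
        have hT0' : T D A d' 0 = 0 := by
          rw [T_zero, hd'i, if_neg hsne, hsabs]; norm_num
        rw [T_succ D A d' 0, T_succ D A d 0, hd'i1, if_neg hcd', if_neg hcd, hT0, hT0']
        by_cases hc0 : c = 0
        · rw [if_pos hc0]
          by_cases hb0 : d (0 + 1) = 0
          · rw [if_pos hb0]; linarith
          · rw [if_neg hb0]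
            have h1 := le_max_left ((((d 0).natAbs : ℝ) - 1) * A) ((((0 : ℕ) : ℝ) + 1) * D)
            have h2 : (0 : ℝ) ≤ ((d (0 + 1)).natAbs : ℝ) * A := mul_nonneg hbR hA.le
            linarith
        · rw [if_neg hc0]
          have hLmax : max (0 : ℝ) ((((0 : ℕ) : ℝ) + 1) * D) ≤ D := by
            apply max_le
            · linarith
            · push_cast
              linarith
          by_cases hb0 : d (0 + 1) = 0
          · rw [if_pos hb0]
            have hb' : ((d (0 + 1)).natAbs : ℝ) = 0 := by rw [hb0]; simp
            rw [hb'] at key1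
            linarith
          · rw [if_neg hb0]
            have h1 := le_max_left ((((d 0).natAbs : ℝ) - 1) * A) ((((0 : ℕ) : ℝ) + 1) * D)
            linarith
      · -- i = p + 1
        have hXc : (((p + 1 : ℕ)) : ℝ) = (p : ℝ) + 1 := by push_cast; ring
        by_cases hz : ∀ j < p + 1, d j = 0
        · -- all lower digits zero
          have hz' : ∀ j < p + 1, d' j = 0 := fun j hj =>
            (hd'o j (by omega) (by omega)).trans (hz j hj)
          have hTd : T D A d (p + 1)
              = ((p : ℝ) + 1) * D + (((d (p + 1)).natAbs : ℝ) - 1) * A := by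
            rw [T_succ, if_neg hne, if_pos hz]
          have hTd' : T D A d' (p + 1) = ((p : ℝ) + 1) * D := by
            rw [T_succ, hd'i, if_neg hsne, if_pos hz', hsabs]
            norm_num
          rw [T_succ D A d' (p + 1), T_succ D A d (p + 1), hd'i1, if_neg hcd',
            if_neg hcd, hTd, hTd', hXc]
          by_cases hc0 : c = 0
          · rw [if_pos hc0]
            by_cases hb0 : d (p + 1 + 1) = 0
            · rw [if_pos hb0]; linarith
            · rw [if_neg hb0]
              have h1 := le_max_left
                (((p : ℝ) + 1) * D + (((d (p + 1)).natAbs : ℝ) - 1) * A)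
                (((p : ℝ) + 1 + 1) * D)
              have h2 : (0 : ℝ) ≤ ((d (p + 1 + 1)).natAbs : ℝ) * A :=
                mul_nonneg (Nat.cast_nonneg _) hA.le
              linarith
          · rw [if_neg hc0]
            have hmL : max (((p : ℝ) + 1) * D) (((p : ℝ) + 1 + 1) * D)
                ≤ ((p : ℝ) + 1 + 1) * D := max_le (by nlinarith) le_rfl
            by_cases hb0 : d (p + 1 + 1) = 0
            · rw [if_pos hb0]
              have hb' : ((d (p + 1 + 1)).natAbs : ℝ) = 0 := by rw [hb0]; simp
              rw [hb'] at key1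
              linarith
            · rw [if_neg hb0]
              have h1 := le_max_left
                (((p : ℝ) + 1) * D + (((d (p + 1)).natAbs : ℝ) - 1) * A)
                (((p : ℝ) + 1 + 1) * D)
              linarith
        · -- some lower digit nonzero
          have hM' : T D A d' p = T D A d p :=
            T_congr D A d' d p fun j hj => hd'o j (by omega) (by omega)
          have hz' : ¬∀ j < p + 1, d' j = 0 := fun h =>
            hz fun j hj => ((hd'o j (by omega) (by omega)).symm.trans (h j hj))
          rw [T_succ D A d' (p + 1), T_succ D A d (p + 1), hd'i1, if_neg hcd',
            if_neg hcd, T_succ D A d' p, T_succ D A d p, hd'i, if_neg hsne,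
            if_neg hz', if_neg hne, if_neg hz, hM', hsabs, hXc]
          simp only [Nat.cast_one, one_mul]
          have hMD : ((p : ℝ) + 1) * D ≤ max (T D A d p) (((p : ℝ) + 1) * D) :=
            le_max_right _ _
          have hMA : ((p : ℝ) + 1 + 1) * D
              ≤ max (T D A d p) (((p : ℝ) + 1) * D) + A := by nlinarith
          have hmaxL : max (max (T D A d p) (((p : ℝ) + 1) * D) + A)
                (((p : ℝ) + 1 + 1) * D)
              ≤ max (T D A d p) (((p : ℝ) + 1) * D) + A := max_le le_rfl hMA
          by_cases hc0 : c = 0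
          · rw [if_pos hc0]
            by_cases hb0 : d (p + 1 + 1) = 0
            · rw [if_pos hb0]; linarith
            · rw [if_neg hb0]
              have h1 := le_max_left
                (max (T D A d p) (((p : ℝ) + 1) * D) + ((d (p + 1)).natAbs : ℝ) * A)
                (((p : ℝ) + 1 + 1) * D)
              have h2 : (0 : ℝ) ≤ ((d (p + 1 + 1)).natAbs : ℝ) * A :=
                mul_nonneg (Nat.cast_nonneg _) hA.le
              linarith
          · rw [if_neg hc0]
            by_cases hb0 : d (p + 1 + 1) = 0
            · rw [if_pos hb0]
              have hb' : ((d (p + 1 + 1)).natAbs : ℝ) = 0 := by rw [hb0]; simp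
              rw [hb'] at key2
              linarith
            · rw [if_neg hb0]
              have h1 := le_max_left
                (max (T D A d p) (((p : ℝ) + 1) * D) + ((d (p + 1)).natAbs : ℝ) * A)
                (((p : ℝ) + 1 + 1) * D)
              linarith
    exact T_mono_above D A d d' (i + 1) i (by omega) hne (by rw [hd'i]; exact hsne)
      (fun j hj => hd'o j (by omega) (by omega)) hbase lam hi
end

section
/- For D = 1 and A ≥ 1, and any representation N over {-1,0,1} of a positive integer, the delay satisfies δ(N, i) = T(N, i) − i for all i, where δ is defined by the recursion: δ(N,0) = 0; δ(N,i) = δ(N,i-1) − 1 if i > 0 and n_i = 0; δ(N,i) = 0 if n_i ≠ 0 and all lower digits are 0; δ(N,i) = max(δ(N,i-1) + (A−1), A) otherwise. -/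
/-!
With `D = 1`, subtracting `i` from each clause of the recursion for `T` gives the corresponding
clause for `δ`: a zero digit keeps `T` and lowers `T - i` by one, and for a digit of absolute
value one `max (T i) (i + 1) + A - (i + 1) = max (T i - i + (A - 1)) A`.
-/

theorem Int.natAbs_eq_one_of_signed_digit {z : ℤ} (hz : z = -1 ∨ z = 0 ∨ z = 1) (h0 : z ≠ 0) :
    z.natAbs = 1 := by
  omega

theorem delta_eq_T_one_sub {A : ℝ} {d : ℕ → ℤ} (hd : ∀ i, d i ≠ 0 → (d i).natAbs = 1) :
    ∀ i : ℕ, delta A d i = T 1 A d i - i := by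
  have habs : ∀ i, d i ≠ 0 → ((d i).natAbs : ℝ) = 1 := fun i hi => by exact_mod_cast hd i hi
  intro i
  induction i with
  | zero =>
    by_cases h0 : d 0 = 0
    · simp [delta, T, h0]
    · simp [delta, T, h0, habs 0 h0]
  | succ i ih =>
    simp only [delta, T]
    by_cases hzero : d (i + 1) = 0
    · simp only [hzero, if_true, ih]
      push_cast
      ring
    rw [if_neg hzero, if_neg hzero, habs _ hzero]
    by_cases hlow : ∀ j < i + 1, d j = 0
    · rw [if_pos hlow, if_pos hlow]
      push_cast
      ring
    · rw [if_neg hlow, if_neg hlow, ih, ← max_add_add_right, ← max_sub_sub_right]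
      congr 1 <;> push_cast <;> ring

theorem stmt6_general (A : ℝ) (d : ℕ → ℤ)
    (hd : ∀ i, d i = -1 ∨ d i = 0 ∨ d i = 1) :
    ∀ i : ℕ, delta A d i = T 1 A d i - i :=
  delta_eq_T_one_sub fun i => Int.natAbs_eq_one_of_signed_digit (hd i)

/-- For D = 1 and A ≥ 1, the delay of a {-1,0,1}-representation satisfies
δ(N,i) = T(N,i) − i for all i. -/
theorem stmt6 (A : ℝ) (hA : 1 ≤ A) (d : ℕ → ℤ)
    (hd : ∀ i, d i = -1 ∨ d i = 0 ∨ d i = 1) :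
    ∀ i : ℕ, delta A d i = T 1 A d i - i :=
  stmt6_general A d hd
end

section
/- (Monotonicity of delay) Let D = 1, A ≥ 1, and let N = n_λ...n_0 and N' = n'_λ...n'_0 be representations over {-1,0,1} such that n_k = n'_k for all i ≤ k ≤ j (with i > 0), both N and N' have some nonzero digit below index i, and δ(N, i−1) ≥ δ(N', i−1). Then δ(N, j) ≥ δ(N', j). -/
/-! Once a representation has a nonzero digit, each step of the delay recurrence is a monotone
function of the previous delay that depends only on the current digit, so on the common digits
`i..j` the inequality at `i - 1` propagates step by step up to `j`. -/

theorem delta_succ_of_exists_ne_zero (A : ℝ) {d : ℕ → ℤ} {m : ℕ}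
    (h : ∃ p < m + 1, d p ≠ 0) :
    delta A d (m + 1) =
      if d (m + 1) = 0 then delta A d m - 1 else max (delta A d m + (A - 1)) A := by
  obtain ⟨p, hpm, hp⟩ := h
  have hne : ¬ ∀ j < m + 1, d j = 0 := fun hall => hp (hall p hpm)
  simp only [delta, hne, if_false]

theorem delta_succ_le_delta_succ (A : ℝ) {d d' : ℕ → ℤ} {m : ℕ}
    (hp : ∃ p < m + 1, d p ≠ 0) (hq : ∃ q < m + 1, d' q ≠ 0)
    (hdigit : d (m + 1) = d' (m + 1)) (hle : delta A d' m ≤ delta A d m) :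
    delta A d' (m + 1) ≤ delta A d (m + 1) := by
  rw [delta_succ_of_exists_ne_zero A hp, delta_succ_of_exists_ne_zero A hq, hdigit]
  split_ifs
  · linarith
  · exact max_le_max (by linarith) le_rfl

theorem stmt7_general (A : ℝ) (d d' : ℕ → ℤ)
    (i j : ℕ) (hij : i ≤ j)
    (heq : ∀ k, i ≤ k → k ≤ j → d k = d' k)
    (hp : ∃ p < i, d p ≠ 0) (hq : ∃ q < i, d' q ≠ 0)
    (hdel : delta A d' (i - 1) ≤ delta A d (i - 1)) :
    delta A d' j ≤ delta A d j := by
  obtain ⟨p, hpi, hp⟩ := hp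
  obtain ⟨q, hqi, hq⟩ := hq
  suffices ∀ m, i - 1 ≤ m → m ≤ j → delta A d' m ≤ delta A d m from this j (by omega) le_rfl
  intro m hm
  induction m, hm using Nat.le_induction with
  | base => exact fun _ => hdel
  | succ m hm ih =>
    intro hmj
    exact delta_succ_le_delta_succ A ⟨p, by omega, hp⟩ ⟨q, by omega, hq⟩
      (heq (m + 1) (by omega) hmj) (ih (by omega))

/-- Monotonicity of delay: if two {-1,0,1}-representations agree on digits
i..j, both have a nonzero digit below i, and δ(N,i−1) ≥ δ(N',i−1), then
δ(N,j) ≥ δ(N',j). -/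
theorem stmt7 (A : ℝ) (hA : 1 ≤ A) (d d' : ℕ → ℤ)
    (hd : ∀ k, d k = -1 ∨ d k = 0 ∨ d k = 1)
    (hd' : ∀ k, d' k = -1 ∨ d' k = 0 ∨ d' k = 1)
    (i j : ℕ) (hi : 0 < i) (hij : i ≤ j)
    (heq : ∀ k, i ≤ k → k ≤ j → d k = d' k)
    (hp : ∃ p < i, d p ≠ 0) (hq : ∃ q < i, d' q ≠ 0)
    (hdel : delta A d' (i - 1) ≤ delta A d (i - 1)) :
    delta A d' j ≤ delta A d j :=
  stmt7_general A d d' i j hij heq hp hq hdel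
end

section
/- Let D = 1, A ≥ 2, k ≥ 1, and let N, N' be representations over {-1,0,1} with digits n_{i+k}...n_i = 01^k in N and n'_{i+k}...n'_i = 10^k in N' (agreeing below index i is not required), such that δ(N, i−1) ≥ δ(N', i−1) ≥ 2 and both have a nonzero digit below index i. Then δ(N, i+k) ≥ δ(N', i+k) ≥ 2. -/
/-! Along the run of zeros of `N'` the delay drops by one per digit, while along the run of ones
of `N` it grows by at least `A - 1` per digit (a nonzero digit below `i` keeps the recursion in its
generic branch). The top digits then give `δ(N', i+k) = max (δ(N', i-1) - k + A - 1) A` and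
`δ(N, i+k) ≥ δ(N, i-1) + k (A - 1) - 1`, and `k ≥ 1`, `A ≥ 2`, `δ(N, i-1) ≥ 2` compare the two. -/

section

variable {A : ℝ} {d : ℕ → ℤ} {n : ℕ}

theorem delta_succ_of_eq_zero (h : d (n + 1) = 0) : delta A d (n + 1) = delta A d n - 1 := by
  rw [delta, if_pos h]

theorem delta_succ_of_ne_zero (h : d (n + 1) ≠ 0) (hp : ∃ p ≤ n, d p ≠ 0) :
    delta A d (n + 1) = max (delta A d n + (A - 1)) A := by
  obtain ⟨p, hpn, hp0⟩ := hp
  rw [delta, if_neg h, if_neg fun hall => hp0 (hall p (Nat.lt_succ_of_le hpn))]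

theorem delta_add_of_eq_zero (k : ℕ) (hz : ∀ m, n < m → m ≤ n + k → d m = 0) :
    delta A d (n + k) = delta A d n - k := by
  induction k with
  | zero => simp
  | succ k ih =>
    rw [← add_assoc, delta_succ_of_eq_zero (hz (n + k + 1) (by omega) (by omega)),
      ih fun m h₁ h₂ => hz m h₁ (by omega)]
    push_cast
    ring

theorem delta_add_ge_of_ne_zero (k : ℕ) (hnz : ∀ m, n < m → m ≤ n + k → d m ≠ 0)
    (hp : ∃ p ≤ n, d p ≠ 0) : delta A d n + k * (A - 1) ≤ delta A d (n + k) := by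
  obtain ⟨p, hpn, hp0⟩ := hp
  induction k with
  | zero => simp
  | succ k ih =>
    rw [← add_assoc,
      delta_succ_of_ne_zero (hnz (n + k + 1) (by omega) (by omega)) ⟨p, by omega, hp0⟩]
    have := ih fun m h₁ h₂ => hnz m h₁ (by omega)
    push_cast
    linarith [le_max_left (delta A d (n + k) + (A - 1)) A]

end

theorem stmt8_general (A : ℝ) (hA : 2 ≤ A) (k i : ℕ) (hk : 1 ≤ k) (hi : 0 < i)
    (d d' : ℕ → ℤ)
    (htop : d (i + k) = 0) (hones : ∀ m, i ≤ m → m < i + k → d m = 1)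
    (htop' : d' (i + k) = 1) (hzeros : ∀ m, i ≤ m → m < i + k → d' m = 0)
    (hp : ∃ p < i, d p ≠ 0) (hq : ∃ q < i, d' q ≠ 0)
    (h2 : 2 ≤ delta A d' (i - 1))
    (hdel : delta A d' (i - 1) ≤ delta A d (i - 1)) :
    2 ≤ delta A d' (i + k) ∧ delta A d' (i + k) ≤ delta A d (i + k) := by
  obtain ⟨j, rfl⟩ : ∃ j, i = j + 1 := ⟨i - 1, by omega⟩
  obtain ⟨l, rfl⟩ : ∃ l, k = l + 1 := ⟨k - 1, by omega⟩
  obtain ⟨p, hpj, hp0⟩ := hp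
  obtain ⟨q, hqj, hq0⟩ := hq
  rw [Nat.add_sub_cancel] at h2 hdel
  rw [show j + 1 + (l + 1) = j + (l + 1) + 1 by omega] at htop htop' ⊢
  have hzeros_run : delta A d' (j + (l + 1)) = delta A d' j - (l + 1) := by
    exact_mod_cast delta_add_of_eq_zero (l + 1) fun m h₁ h₂ => hzeros m h₁ (by omega)
  have hones_run : delta A d j + (l + 1) * (A - 1) ≤ delta A d (j + (l + 1)) := by
    exact_mod_cast delta_add_ge_of_ne_zero (l + 1)
      (fun m h₁ h₂ => by simp [hones m h₁ (by omega)]) ⟨p, by omega, hp0⟩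
  rw [delta_succ_of_ne_zero (by simp [htop']) ⟨q, by omega, hq0⟩, hzeros_run,
    delta_succ_of_eq_zero htop]
  have hl : 0 ≤ (l : ℝ) * (A - 1) := mul_nonneg l.cast_nonneg (by linarith)
  exact ⟨hA.trans (le_max_right _ _), max_le (by linarith) (by linarith)⟩

/-- If N has the pattern 0 1^k at indices i+k..i, N' has 1 0^k there, both
have a nonzero digit below i, and δ(N,i−1) ≥ δ(N',i−1) ≥ 2, then
δ(N,i+k) ≥ δ(N',i+k) ≥ 2 (for D = 1, A ≥ 2, k ≥ 1). -/
theorem stmt8 (A : ℝ) (hA : 2 ≤ A) (k i : ℕ) (hk : 1 ≤ k) (hi : 0 < i)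
    (d d' : ℕ → ℤ)
    (hd : ∀ m, d m = -1 ∨ d m = 0 ∨ d m = 1)
    (hd' : ∀ m, d' m = -1 ∨ d' m = 0 ∨ d' m = 1)
    (htop : d (i + k) = 0) (hones : ∀ m, i ≤ m → m < i + k → d m = 1)
    (htop' : d' (i + k) = 1) (hzeros : ∀ m, i ≤ m → m < i + k → d' m = 0)
    (hp : ∃ p < i, d p ≠ 0) (hq : ∃ q < i, d' q ≠ 0)
    (h2 : 2 ≤ delta A d' (i - 1))
    (hdel : delta A d' (i - 1) ≤ delta A d (i - 1)) :
    2 ≤ delta A d' (i + k) ∧ delta A d' (i + k) ≤ delta A d (i + k) :=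
  stmt8_general A hA k i hk hi d d' htop hones htop' hzeros hp hq h2 hdel
end

section
/- Let D = 1 and A ≥ 2. If the binary representation of n (over {0,1}) ends with the pattern 11(01)^p 01 0^ℓ for some p ≥ 0 and ℓ ≥ 0, then the representation obtained by rewriting the ending 01 to 1(-1) and then converting everything above the new least significant nonzero digit to NAF has delay δ at index ℓ+2p+3 equal to A + p(A−2) − 2, which is at most the delay (A−1) + p(A−2) obtained by directly converting to NAF without moving the least significant nonzero digit. -/
lemma delta_zero_step (A : ℝ) (d : ℕ → ℤ) (i : ℕ) (h : d (i + 1) = 0) :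
    delta A d (i + 1) = delta A d i - 1 := by
  simp [delta, h]

lemma delta_pos_step (A : ℝ) (d : ℕ → ℤ) (i k : ℕ) (hk : k ≤ i) (hknz : d k ≠ 0)
    (h : d (i + 1) ≠ 0) :
    delta A d (i + 1) = max (delta A d i + (A - 1)) A := by
  have hne : ¬ ∀ j < i + 1, d j = 0 := fun hall => hknz (hall k (by omega))
  rw [delta, if_neg h, if_neg hne]

lemma delta_base (A : ℝ) (d : ℕ → ℤ) (l : ℕ) (h0 : ∀ j < l, d j = 0) (hl : d l ≠ 0) :
    delta A d l = 0 := by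
  cases l with
  | zero => simp [delta]
  | succ k =>
    rw [delta, if_neg hl, if_pos h0]

/-- If N_B ends with 11(01)^p 01 0^ℓ, rewriting the ending 01 to 1(-1) and
converting to NAF above gives ending 00(-1 0)^p (-1)(-1) 0^ℓ with delay
A + p(A−2) − 2 at index ℓ+2p+3, which is at most the delay
(A−1) + p(A−2) of the direct NAF ending 0(-1)(01)^p 01 0^ℓ. -/
theorem stmt10 (A : ℝ) (hA : 2 ≤ A) (l p : ℕ)
    (ds dn : ℕ → ℤ)
    (hs0 : ∀ j < l, ds j = 0)
    (hs1 : ds l = -1) (hs2 : ds (l + 1) = -1)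
    (hs3 : ∀ t < p, ds (l + 2 + 2 * t) = 0 ∧ ds (l + 3 + 2 * t) = -1)
    (hs4 : ds (l + 2 + 2 * p) = 0) (hs5 : ds (l + 3 + 2 * p) = 0)
    (hn0 : ∀ j < l, dn j = 0)
    (hn1 : dn l = 1) (hn2 : dn (l + 1) = 0)
    (hn3 : ∀ t < p, dn (l + 2 + 2 * t) = 1 ∧ dn (l + 3 + 2 * t) = 0)
    (hn4 : dn (l + 2 + 2 * p) = -1) (hn5 : dn (l + 3 + 2 * p) = 0) :
    delta A ds (l + 3 + 2 * p) = A + (p : ℝ) * (A - 2) - 2 ∧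
    delta A dn (l + 3 + 2 * p) = (A - 1) + (p : ℝ) * (A - 2) ∧
    delta A ds (l + 3 + 2 * p) ≤ delta A dn (l + 3 + 2 * p) := by
  have hs1' : ds l ≠ 0 := by rw [hs1]; norm_num
  have hA2 : (0:ℝ) ≤ A - 2 := by linarith
  -- chain for ds
  have hds : ∀ t, t ≤ p → delta A ds (l + 1 + 2 * t) = A + (t : ℝ) * (A - 2) := by
    intro t
    induction t with
    | zero =>
      intro _
      have hb : delta A ds l = 0 := delta_base A ds l hs0 hs1'
      have : delta A ds (l + 1) = max (delta A ds l + (A - 1)) A :=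
        delta_pos_step A ds l l le_rfl hs1' (by rw [hs2]; norm_num)
      rw [show l + 1 + 2 * 0 = l + 1 from by ring, this, hb]
      rw [max_eq_right (by linarith)]
      push_cast; ring
    | succ t ih =>
      intro ht
      have ihv := ih (by omega)
      have h2t : ds (l + 2 + 2 * t) = 0 := (hs3 t (by omega)).1
      have h3t : ds (l + 3 + 2 * t) = -1 := (hs3 t (by omega)).2
      have e2 : l + 1 + 2 * (t + 1) = (l + 2 + 2 * t) + 1 := by ring
      have e1 : l + 2 + 2 * t = (l + 1 + 2 * t) + 1 := by ring
      rw [e2, delta_pos_step A ds (l + 2 + 2 * t) l (by omega) hs1'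
        (by rw [show l + 2 + 2 * t + 1 = l + 3 + 2 * t from by ring, h3t]; norm_num)]
      rw [e1, delta_zero_step A ds (l + 1 + 2 * t) (by rw [← e1]; exact h2t), ihv]
      have htn : (0:ℝ) ≤ (t : ℝ) := Nat.cast_nonneg t
      rw [max_eq_left (by nlinarith [mul_nonneg htn hA2])]
      push_cast; ring
  -- chain for dn
  have hn1' : dn l ≠ 0 := by rw [hn1]; norm_num
  have hdn : ∀ t, t ≤ p → delta A dn (l + 2 + 2 * t) = A + (t : ℝ) * (A - 2) := by
    intro t
    induction t with
    | zero =>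
      intro _
      have hb : delta A dn l = 0 := delta_base A dn l hn0 hn1'
      have h1 : delta A dn (l + 1) = delta A dn l - 1 := delta_zero_step A dn l hn2
      have hnz2 : dn (l + 1 + 1) ≠ 0 := by
        rcases Nat.eq_zero_or_pos p with hp | hp
        · rw [show l + 1 + 1 = l + 2 + 2 * 0 from by ring]
          subst hp; rw [show l + 2 + 2 * 0 = l + 2 + 2 * 0 from rfl, hn4]; norm_num
        · rw [show l + 1 + 1 = l + 2 + 2 * 0 from by ring, (hn3 0 hp).1]; norm_num
      have h2 : delta A dn (l + 1 + 1) = max (delta A dn (l + 1) + (A - 1)) A :=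
        delta_pos_step A dn (l + 1) l (by omega) hn1' hnz2
      rw [show l + 2 + 2 * 0 = l + 1 + 1 from by ring, h2, h1, hb]
      rw [max_eq_right (by linarith)]
      push_cast; ring
    | succ t ih =>
      intro ht
      have ihv := ih (by omega)
      have h3t : dn (l + 3 + 2 * t) = 0 := (hn3 t (by omega)).2
      have hnz : dn (l + 3 + 2 * t + 1) ≠ 0 := by
        rcases Nat.lt_or_ge (t + 1) p with hp | hp
        · rw [show l + 3 + 2 * t + 1 = l + 2 + 2 * (t + 1) from by ring, (hn3 (t + 1) hp).1]
          norm_num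
        · have : t + 1 = p := by omega
          rw [show l + 3 + 2 * t + 1 = l + 2 + 2 * p from by omega, hn4]
          norm_num
      have e2 : l + 2 + 2 * (t + 1) = (l + 3 + 2 * t) + 1 := by ring
      have e1 : l + 3 + 2 * t = (l + 2 + 2 * t) + 1 := by ring
      rw [e2, delta_pos_step A dn (l + 3 + 2 * t) l (by omega) hn1' hnz]
      rw [e1, delta_zero_step A dn (l + 2 + 2 * t) (by rw [← e1]; exact h3t), ihv]
      have htn : (0:ℝ) ≤ (t : ℝ) := Nat.cast_nonneg t
      rw [max_eq_left (by nlinarith [mul_nonneg htn hA2])]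
      push_cast; ring
  have hdsp := hds p le_rfl
  have hdnp := hdn p le_rfl
  have eds2 : l + 2 + 2 * p = (l + 1 + 2 * p) + 1 := by ring
  have eds3 : l + 3 + 2 * p = (l + 2 + 2 * p) + 1 := by ring
  have hds2 : delta A ds (l + 2 + 2 * p) = A + (p : ℝ) * (A - 2) - 1 := by
    rw [eds2, delta_zero_step A ds (l + 1 + 2 * p) (by rw [← eds2]; exact hs4), hdsp]
  have hds3 : delta A ds (l + 3 + 2 * p) = A + (p : ℝ) * (A - 2) - 2 := by
    rw [eds3, delta_zero_step A ds (l + 2 + 2 * p) (by rw [← eds3]; exact hs5), hds2]; ring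
  have hdn3 : delta A dn (l + 3 + 2 * p) = (A - 1) + (p : ℝ) * (A - 2) := by
    rw [eds3, delta_zero_step A dn (l + 2 + 2 * p) (by rw [← eds3]; exact hn5), hdnp]; ring
  exact ⟨hds3, hdn3, by rw [hds3, hdn3]; linarith⟩
end

section
/- Let D = 1, A ≥ 2, and n be a positive integer with binary length λ+1. There exists a representation N* of n over {-1,0,1} of length at most λ+2 that is in non-adjacent form except possibly at the least significant nonzero digit, and T(N*, λ+1) ≤ (λ/2 + 1)·A + 1. -/
-- `naf n` is the non-adjacent form of `n`: an odd remainder `m` gets the digit `2 - m % 4`,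
-- which makes `m - digit` divisible by 4, so the next digit is 0.
def nafDigit (m : ℤ) : ℤ := if m % 2 = 0 then 0 else 2 - m % 4

def nafTail (n : ℤ) : ℕ → ℤ
  | 0 => n
  | i + 1 => (nafTail n i - nafDigit (nafTail n i)) / 2

def naf (n : ℤ) (i : ℕ) : ℤ := nafDigit (nafTail n i)

section NonAdjacentForm

variable {n : ℤ}

lemma nafDigit_eq_neg_one_or_zero_or_one (m : ℤ) :
    nafDigit m = -1 ∨ nafDigit m = 0 ∨ nafDigit m = 1 := by
  unfold nafDigit; split_ifs <;> omega

lemma nafDigit_eq_zero_iff {m : ℤ} : nafDigit m = 0 ↔ m % 2 = 0 := by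
  unfold nafDigit; split_ifs <;> omega

lemma four_dvd_sub_nafDigit {m : ℤ} (h : nafDigit m ≠ 0) : 4 ∣ m - nafDigit m := by
  unfold nafDigit at *; split_ifs at * <;> omega

lemma two_mul_nafTail_succ (n : ℤ) (i : ℕ) :
    2 * nafTail n (i + 1) = nafTail n i - nafDigit (nafTail n i) := by
  have h : 2 ∣ nafTail n i - nafDigit (nafTail n i) := by unfold nafDigit; split_ifs <;> omega
  rw [nafTail]
  omega

lemma naf_eq_neg_one_or_zero_or_one (n : ℤ) (i : ℕ) :
    naf n i = -1 ∨ naf n i = 0 ∨ naf n i = 1 :=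
  nafDigit_eq_neg_one_or_zero_or_one _

lemma naf_succ_eq_zero_of_ne_zero {i : ℕ} (h : naf n i ≠ 0) : naf n (i + 1) = 0 := by
  have h4 := four_dvd_sub_nafDigit h
  have h2 := two_mul_nafTail_succ n i
  rw [naf, nafDigit_eq_zero_iff]
  omega

lemma sum_naf_add_nafTail (n : ℤ) (i : ℕ) :
    ∑ j ∈ Finset.range i, naf n j * 2 ^ j + nafTail n i * 2 ^ i = n := by
  induction i with
  | zero => simp [nafTail]
  | succ i ih =>
    have hdigit : naf n i = nafDigit (nafTail n i) := rfl
    rw [Finset.sum_range_succ]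
    linear_combination ih + (2 : ℤ) ^ i * (two_mul_nafTail_succ n i + hdigit)

lemma nafTail_mul_two_pow_le (n : ℤ) (i : ℕ) : nafTail n i * 2 ^ i ≤ n + 2 ^ i - 1 := by
  induction i with
  | zero => simp [nafTail]
  | succ i ih =>
    have h := two_mul_nafTail_succ n i
    have hstep : 2 * nafTail n (i + 1) ≤ nafTail n i + 1 := by
      rcases nafDigit_eq_neg_one_or_zero_or_one (nafTail n i) with h1 | h1 | h1 <;> omega
    calc nafTail n (i + 1) * 2 ^ (i + 1) = 2 * nafTail n (i + 1) * 2 ^ i := by ring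
      _ ≤ (nafTail n i + 1) * 2 ^ i := by gcongr
      _ ≤ n + 2 ^ (i + 1) - 1 := by rw [pow_succ]; linarith

lemma nafTail_nonneg (hn : 0 ≤ n) (i : ℕ) : 0 ≤ nafTail n i := by
  induction i with
  | zero => exact hn
  | succ i ih =>
    have h := two_mul_nafTail_succ n i
    unfold nafDigit at h
    split_ifs at h <;> omega

lemma nafTail_succ_eq_zero {i : ℕ} (h0 : 0 ≤ nafTail n i) (h1 : nafTail n i ≤ 1) :
    nafTail n (i + 1) = 0 := by
  have h := two_mul_nafTail_succ n i
  unfold nafDigit at h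
  split_ifs at h <;> omega

lemma nafTail_le_one {k : ℕ} (hn : n < 2 ^ (k + 1)) : nafTail n (k + 1) ≤ 1 := by
  have h := nafTail_mul_two_pow_le n (k + 1)
  have hpos : (0 : ℤ) < 2 ^ (k + 1) := by positivity
  by_contra! h2
  nlinarith

lemma nafTail_eq_zero {k i : ℕ} (hn0 : 0 ≤ n) (hn : n < 2 ^ (k + 1)) (hi : k + 2 ≤ i) :
    nafTail n i = 0 := by
  induction i, hi using Nat.le_induction with
  | base => exact nafTail_succ_eq_zero (nafTail_nonneg hn0 _) (nafTail_le_one hn)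
  | succ i _ ih => exact nafTail_succ_eq_zero ih.ge (by omega)

lemma naf_eq_zero {k i : ℕ} (hn0 : 0 ≤ n) (hn : n < 2 ^ (k + 1)) (hi : k + 1 < i) :
    naf n i = 0 := by
  rw [naf, nafTail_eq_zero hn0 hn hi]
  rfl

lemma val_naf {k : ℕ} (hn0 : 0 ≤ n) (hn : n < 2 ^ (k + 1)) : val (naf n) (k + 1) = n := by
  simpa [val, nafTail_eq_zero hn0 hn le_rfl] using sum_naf_add_nafTail n (k + 2)

end NonAdjacentForm

section Timing

variable {A : ℝ} {d : ℕ → ℤ}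

lemma T_one_eq_add_delta (hd : ∀ i, d i = -1 ∨ d i = 0 ∨ d i = 1) (i : ℕ) :
    T 1 A d i = i + delta A d i := by
  have habs : ∀ i, d i ≠ 0 → ((d i).natAbs : ℝ) = 1 := by
    intro i hi
    rcases hd i with h | h | h <;> simp_all
  induction i with
  | zero =>
    simp only [T, delta]
    split_ifs with h
    · simp
    · simp [habs 0 h]
  | succ i ih =>
    simp only [T, delta]
    split_ifs with h1 h2
    · rw [ih]; push_cast; ring
    · rw [habs _ h1]; push_cast; ring
    · rw [habs _ h1, ih]
      push_cast
      rw [← max_add_add_right, ← max_add_add_left]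
      congr 1 <;> ring

lemma delta_le_of_nonadjacent_cases (hA : 2 ≤ A) (hnaf : ∀ i, d i ≠ 0 → d (i + 1) = 0)
    (i : ℕ) :
    (d i ≠ 0 → delta A d i ≤ i / 2 * (A - 2) + 2) ∧
      (d i = 0 → delta A d i ≤ max ((i - 1) / 2 * (A - 2) + 1) 0) := by
  induction i with
  | zero => simp [delta]
  | succ i ih =>
    obtain ⟨ih_ne, ih_eq⟩ := ih
    push_cast
    refine ⟨fun hne => ?_, fun heq => ?_⟩
    · simp only [delta, if_neg hne]
      split_ifs with hfirst
      · have : 0 ≤ ((i : ℝ) + 1) / 2 * (A - 2) := by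
          have : (0 : ℝ) ≤ A - 2 := by linarith
          positivity
        linarith
      · have hdi : d i = 0 := by
          by_contra h
          exact hne (hnaf i h)
        have hi : (1 : ℝ) ≤ i := by
          push Not at hfirst
          obtain ⟨j, hj, hdj⟩ := hfirst
          have : j ≠ i := fun h => hdj (h ▸ hdi)
          exact_mod_cast (show 1 ≤ i by omega)
        refine max_le ?_ (by nlinarith)
        rcases le_max_iff.mp (ih_eq hdi) with h | h <;> nlinarith
    · simp only [delta, if_pos heq]
      by_cases hdi : d i = 0
      · rcases le_max_iff.mp (ih_eq hdi) with h | h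
        · exact le_max_of_le_left (by nlinarith)
        · exact le_max_of_le_right (by linarith)
      · exact le_max_of_le_left (by linarith [ih_ne hdi])

lemma delta_le_of_nonadjacent (hA : 2 ≤ A) (hnaf : ∀ i, d i ≠ 0 → d (i + 1) = 0) (i : ℕ) :
    delta A d i ≤ (i + 1) / 2 * (A - 2) + 2 := by
  obtain ⟨hne, heq⟩ := delta_le_of_nonadjacent_cases hA hnaf i
  have : 0 ≤ ((i : ℝ) + 1) / 2 * (A - 2) := by
    have : (0 : ℝ) ≤ A - 2 := by linarith
    positivity
  by_cases h : d i = 0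
  · rcases le_max_iff.mp (heq h) with h | h <;> nlinarith
  · nlinarith [hne h]

end Timing

theorem stmt11_general (A : ℝ) (hA : 2 ≤ A) (lam n : ℕ)
    (hn2 : n < 2 ^ (lam + 1)) :
    ∃ d : ℕ → ℤ,
      (∀ i, d i = -1 ∨ d i = 0 ∨ d i = 1) ∧
      (∀ i, lam + 1 < i → d i = 0) ∧
      val d (lam + 1) = (n : ℤ) ∧
      (∀ i, d i ≠ 0 → d (i + 1) ≠ 0 → ∀ j < i, d j = 0) ∧
      T 1 A d (lam + 1) ≤ ((lam : ℝ) / 2 + 1) * A + 1 := by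
  have hn0 : (0 : ℤ) ≤ n := n.cast_nonneg
  have hlt : (n : ℤ) < 2 ^ (lam + 1) := by exact_mod_cast hn2
  have hnaf : ∀ i, naf n i ≠ 0 → naf n (i + 1) = 0 := fun _ => naf_succ_eq_zero_of_ne_zero
  refine ⟨naf n, naf_eq_neg_one_or_zero_or_one n, fun _ => naf_eq_zero hn0 hlt,
    val_naf hn0 hlt, fun i hi hi1 => absurd (hnaf i hi) hi1, ?_⟩
  rw [T_one_eq_add_delta (naf_eq_neg_one_or_zero_or_one n)]
  have hδ := delta_le_of_nonadjacent hA hnaf (lam + 1)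
  push_cast at hδ ⊢
  linarith

/-- For D = 1, A ≥ 2, and n of binary length λ+1, there is a
{-1,0,1}-representation of n of length at most λ+2, in NAF except possibly
at the least significant nonzero digit, with
T(N*, λ+1) ≤ (λ/2 + 1)A + 1. -/
theorem stmt11 (A : ℝ) (hA : 2 ≤ A) (lam n : ℕ)
    (hn : 2 ^ lam ≤ n) (hn2 : n < 2 ^ (lam + 1)) :
    ∃ d : ℕ → ℤ,
      (∀ i, d i = -1 ∨ d i = 0 ∨ d i = 1) ∧
      (∀ i, lam + 1 < i → d i = 0) ∧
      val d (lam + 1) = (n : ℤ) ∧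
      (∀ i, d i ≠ 0 → d (i + 1) ≠ 0 → ∀ j < i, d j = 0) ∧
      T 1 A d (lam + 1) ≤ ((lam : ℝ) / 2 + 1) * A + 1 :=
  stmt11_general A hA lam n hn2
end

section
/- Let D = 1 and 1 ≤ A < 2, and let N be the NAF representation of a positive integer n with highest index λ. Then T(N, λ) ≤ A + λ, i.e., the NAF parallel computation time exceeds λ·D by at most A. -/
section TimeRecursion

variable (D A : ℝ) (d : ℕ → ℤ) (i : ℕ)

lemma T_succ_of_eq_zero (h : d (i + 1) = 0) : T D A d (i + 1) = T D A d i := by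
  rw [T, if_pos h]

lemma T_succ_of_lower_eq_zero (h : (d (i + 1)).natAbs = 1) (hlow : ∀ j < i + 1, d j = 0) :
    T D A d (i + 1) = ((i : ℝ) + 1) * D := by
  have hne : d (i + 1) ≠ 0 := Int.natAbs_ne_zero.mp (by omega)
  rw [T, if_neg hne, if_pos hlow, h]
  simp

lemma T_succ_of_natAbs_eq_one (h : (d (i + 1)).natAbs = 1) (hlow : ¬∀ j < i + 1, d j = 0) :
    T D A d (i + 1) = max (T D A d i) (((i : ℝ) + 1) * D) + A := by
  have hne : d (i + 1) ≠ 0 := Int.natAbs_ne_zero.mp (by omega)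
  rw [T, if_neg hne, if_neg hlow, h]
  simp

end TimeRecursion

lemma natAbs_eq_one_of_signed_digit {x : ℤ} (hx : x = -1 ∨ x = 0 ∨ x = 1) (h : x ≠ 0) :
    x.natAbs = 1 := by
  omega

/-- The second conjunct makes the induction go through: at a zero digit there is slack `1`,
so, as `A ≤ 2`, the `max (T i) (i + 1)` at the next (nonzero) digit is just `i + 1`. -/
theorem T_le_add_of_naf (A : ℝ) (hA1 : 1 ≤ A) (hA2 : A ≤ 2) (d : ℕ → ℤ)
    (hd : ∀ i, d i = -1 ∨ d i = 0 ∨ d i = 1) (hnaf : ∀ i, d i * d (i + 1) = 0) (i : ℕ) :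
    T 1 A d i ≤ i + A ∧ (d i = 0 → T 1 A d i ≤ i + A - 1) := by
  induction i with
  | zero =>
    by_cases h0 : d 0 = 0
    · simp only [T, if_pos h0, Nat.cast_zero]
      exact ⟨by linarith, fun _ => by linarith⟩
    · simp only [T, if_neg h0, natAbs_eq_one_of_signed_digit (hd 0) h0, Nat.cast_one, sub_self,
        zero_mul, Nat.cast_zero]
      exact ⟨by linarith, fun h => absurd h h0⟩
  | succ i ih =>
    push_cast
    by_cases hzero : d (i + 1) = 0
    · rw [T_succ_of_eq_zero _ _ _ _ hzero]
      exact ⟨by linarith [ih.1], fun _ => by linarith [ih.1]⟩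
    refine ⟨?_, fun h => absurd h hzero⟩
    have hunit := natAbs_eq_one_of_signed_digit (hd (i + 1)) hzero
    by_cases hlow : ∀ j < i + 1, d j = 0
    · rw [T_succ_of_lower_eq_zero _ _ _ _ hunit hlow]
      linarith
    · have hprev : d i = 0 := (mul_eq_zero.mp (hnaf i)).resolve_right hzero
      have hTi : T 1 A d i ≤ i + 1 := by linarith [ih.2 hprev]
      rw [T_succ_of_natAbs_eq_one _ _ _ _ hunit hlow, mul_one, max_eq_right hTi]

theorem stmt14_general (A : ℝ) (hA1 : 1 ≤ A) (hA2 : A < 2) (lam : ℕ)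
    (d : ℕ → ℤ)
    (hd : ∀ i, d i = -1 ∨ d i = 0 ∨ d i = 1)
    (hnaf : ∀ i, d i * d (i + 1) = 0) :
    T 1 A d lam ≤ A + lam := by
  linarith [(T_le_add_of_naf A hA1 hA2.le d hd hnaf lam).1]

/-- For D = 1 and 1 ≤ A < 2, the NAF representation of a positive integer n
with highest index λ satisfies T(N, λ) ≤ A + λ. -/
theorem stmt14 (A : ℝ) (hA1 : 1 ≤ A) (hA2 : A < 2) (n lam : ℕ) (hn : 0 < n)
    (d : ℕ → ℤ)
    (hd : ∀ i, d i = -1 ∨ d i = 0 ∨ d i = 1)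
    (hnaf : ∀ i, d i * d (i + 1) = 0)
    (hhigh : ∀ i, lam < i → d i = 0)
    (hval : val d lam = (n : ℤ)) :
    T 1 A d lam ≤ A + lam :=
  stmt14_general A hA1 hA2 lam d hd hnaf
end
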